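/- Let (q_t)_{t∈ℤ} be a stationary ergodic sequence of random elements with values in C(Θ, ℝ), the continuous real functions on a compact set Θ ⊂ ℝ^d with the sup norm, such that E[sup_{θ∈Θ} |q_0(θ)|] < ∞. Then (1/n) ∑_{t=1}^n q_t converges almost surely in C(Θ, ℝ) (i.e., uniformly in θ) to the deterministic function θ ↦ E[q_0(θ)]. -/

import Mathlib

/-!
The uniform law is Birkhoff's pointwise ergodic theorem in the Banach space `C(Θ, ℝ)`, whose
norm is the supremum over `θ`.

For real `f` with `∫ f < 0`, the event that the Birkhoff sums `Sₙ f` are bounded above is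
`T`-invariant, hence null or conull. Off this event some `Sₙ f` is positive, so the maximal
ergodic theorem `∫_{sup Sₙ f > 0} f ≥ 0` rules out the null case. Applied to `f - c` and
`-f - c` this gives the real theorem. It passes to integrable Banach-valued functions through
simple functions: Birkhoff averages commute with continuous linear maps, and the set of `L¹`
functions for which the theorem holds is closed, since `‖avg g - avg h‖ ≤ avg ‖g - h‖` and the
real theorem applies to `‖g - h‖`.
-/

open MeasureTheory Filter Topology Set

section BirkhoffMax

variable {α : Type*} (T : α → α) (f : α → ℝ)

/-- `birkhoffMax T f n x = max 0 (S₁ x) … (Sₙ x)`, where `Sₖ = birkhoffSum T f k`. -/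
def birkhoffMax : ℕ → α → ℝ
  | 0 => 0
  | n + 1 => fun x => max 0 (f x + birkhoffMax n (T x))

lemma birkhoffMax_nonneg : ∀ n x, 0 ≤ birkhoffMax T f n x
  | 0, _ => le_rfl
  | _ + 1, _ => le_max_left _ _

lemma birkhoffMax_mono : Monotone (birkhoffMax T f) := by
  refine monotone_nat_of_le_succ fun n => ?_
  induction n with
  | zero => exact birkhoffMax_nonneg T f 1
  | succ n ih => exact fun x => max_le_max le_rfl (add_le_add_right (ih (T x)) _)

lemma birkhoffSum_le_birkhoffMax : ∀ n x, birkhoffSum T f n x ≤ birkhoffMax T f n x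
  | 0, _ => le_rfl
  | n + 1, x => by
    rw [birkhoffSum_succ']
    exact le_max_of_le_right (add_le_add_right (birkhoffSum_le_birkhoffMax n (T x)) _)

lemma birkhoffMax_le_add_comp {n : ℕ} {x : α} (hx : 0 < birkhoffMax T f n x) :
    birkhoffMax T f n x ≤ f x + birkhoffMax T f n (T x) := by
  cases n with
  | zero => exact absurd hx (lt_irrefl 0)
  | succ n =>
    have hpos : 0 < f x + birkhoffMax T f n (T x) :=
      (lt_max_iff.1 hx).resolve_left (lt_irrefl 0)
    calc birkhoffMax T f (n + 1) x = f x + birkhoffMax T f n (T x) := max_eq_right hpos.le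
      _ ≤ f x + birkhoffMax T f (n + 1) (T x) :=
        add_le_add_right (birkhoffMax_mono T f n.le_succ (T x)) _

/-- Garsia's inequality, the pointwise core of the maximal ergodic theorem. -/
lemma birkhoffMax_sub_comp_le_indicator (n : ℕ) (x : α) :
    birkhoffMax T f n x - birkhoffMax T f n (T x) ≤
      {y | 0 < birkhoffMax T f n y}.indicator f x := by
  set s := {y | 0 < birkhoffMax T f n y}
  by_cases hx : 0 < birkhoffMax T f n x
  · rw [indicator_of_mem (s := s) hx]
    linarith [birkhoffMax_le_add_comp T f hx]
  · rw [indicator_of_notMem (s := s) hx]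
    linarith [not_lt.1 hx, birkhoffMax_nonneg T f n (T x)]

lemma bddAbove_birkhoffSum_comp_iff (x : α) :
    BddAbove (range fun n => birkhoffSum T f n (T x)) ↔
      BddAbove (range fun n => birkhoffSum T f n x) := by
  simp only [bddAbove_def, forall_mem_range]
  constructor
  · rintro ⟨C, hC⟩
    refine ⟨max 0 (f x + C), fun n => ?_⟩
    cases n with
    | zero => exact le_max_left _ _
    | succ n =>
      exact (birkhoffSum_succ' T f n x).trans_le (le_max_of_le_right (by linarith [hC n]))
  · rintro ⟨C, hC⟩
    exact ⟨C - f x, fun n => by linarith [hC (n + 1), birkhoffSum_succ' T f n x]⟩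

end BirkhoffMax

section MaximalErgodic

variable {α : Type*} [MeasurableSpace α] {μ : Measure α} {T : α → α} {f : α → ℝ}

lemma measurable_birkhoffSum {E : Type*} [AddCommMonoid E] [MeasurableSpace E]
    [MeasurableAdd₂ E] {g : α → E} (hT : Measurable T) (hg : Measurable g) (n : ℕ) :
    Measurable (birkhoffSum T g n) :=
  Finset.measurable_sum _ fun k _ => hg.comp (hT.iterate k)

lemma measurable_birkhoffMax (hT : Measurable T) (hf : Measurable f) :
    ∀ n, Measurable (birkhoffMax T f n)
  | 0 => measurable_const
  | n + 1 => measurable_const.max (hf.add ((measurable_birkhoffMax hT hf n).comp hT))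

lemma integrable_birkhoffMax (hT : MeasurePreserving T μ μ) (hf : Integrable f μ) :
    ∀ n, Integrable (birkhoffMax T f n) μ
  | 0 => integrable_zero α ℝ μ
  | n + 1 => (integrable_zero α ℝ μ).sup
      (hf.add (hT.integrable_comp_of_integrable (integrable_birkhoffMax hT hf n)))

theorem setIntegral_birkhoffMax_pos_nonneg (hT : MeasurePreserving T μ μ) (hf : Measurable f)
    (hfi : Integrable f μ) (n : ℕ) :
    0 ≤ ∫ x in {x | 0 < birkhoffMax T f n x}, f x ∂μ := by
  set M := birkhoffMax T f n
  have hMm : Measurable M := measurable_birkhoffMax hT.measurable hf n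
  have hM : Integrable M μ := integrable_birkhoffMax hT hfi n
  have hMT : Integrable (fun x => M (T x)) μ := hT.integrable_comp_of_integrable hM
  have hs : MeasurableSet {x | 0 < M x} := measurableSet_lt measurable_const hMm
  have hinv : ∫ x, M (T x) ∂μ = ∫ x, M x ∂μ := by
    rw [← integral_map hT.aemeasurable (by rw [hT.map_eq]; exact hMm.aestronglyMeasurable),
      hT.map_eq]
  calc 0 = ∫ x, (M x - M (T x)) ∂μ := by rw [integral_sub hM hMT, hinv, sub_self]
    _ ≤ ∫ x, {x | 0 < M x}.indicator f x ∂μ :=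
      integral_mono (hM.sub hMT) (hfi.indicator hs) (birkhoffMax_sub_comp_le_indicator T f n)
    _ = _ := integral_indicator hs

theorem setIntegral_iUnion_birkhoffMax_pos_nonneg (hT : MeasurePreserving T μ μ)
    (hf : Measurable f) (hfi : Integrable f μ) :
    0 ≤ ∫ x in ⋃ n, {x | 0 < birkhoffMax T f n x}, f x ∂μ :=
  ge_of_tendsto
    (tendsto_setIntegral_of_monotone
      (fun n => measurableSet_lt measurable_const (measurable_birkhoffMax hT.measurable hf n))
      (fun _ _ hmn _ hx => hx.trans_le (birkhoffMax_mono T f hmn _)) hfi.integrableOn)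
    (Eventually.of_forall (setIntegral_birkhoffMax_pos_nonneg hT hf hfi))

end MaximalErgodic

section Ergodic

variable {α : Type*} [MeasurableSpace α] {μ : Measure α} {T : α → α} {f : α → ℝ}

theorem Ergodic.ae_bddAbove_birkhoffSum (hT : Ergodic T μ) (hf : Measurable f)
    (hfi : Integrable f μ) (hneg : ∫ x, f x ∂μ < 0) :
    ∀ᵐ x ∂μ, BddAbove (range fun n => birkhoffSum T f n x) := by
  have hB : MeasurableSet {x | BddAbove (range fun n => birkhoffSum T f n x)} :=
    measurableSet_bddAbove_range (measurable_birkhoffSum hT.measurable hf)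
  refine (hT.ae_mem_or_ae_notMem hB
    (ext (bddAbove_birkhoffSum_comp_iff T f))).resolve_right fun hunbdd => hneg.not_ge ?_
  have hcover : ∀ᵐ x ∂μ, x ∈ ⋃ n, {x | 0 < birkhoffMax T f n x} := by
    filter_upwards [hunbdd] with x hx
    obtain ⟨_, ⟨n, rfl⟩, hn⟩ := not_bddAbove_iff.1 hx 0
    exact mem_iUnion.2 ⟨n, hn.trans_le (birkhoffSum_le_birkhoffMax T f n x)⟩
  calc 0 ≤ ∫ x in ⋃ n, {x | 0 < birkhoffMax T f n x}, f x ∂μ :=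
        setIntegral_iUnion_birkhoffMax_pos_nonneg hT.toMeasurePreserving hf hfi
    _ = ∫ x, f x ∂μ :=
        setIntegral_eq_integral_of_ae_compl_eq_zero (hcover.mono fun x hx hx' => absurd hx hx')

variable [IsProbabilityMeasure μ]

theorem Ergodic.ae_birkhoffSum_le_add (hT : Ergodic T μ) (hf : Measurable f)
    (hfi : Integrable f μ) {c : ℝ} (hc : ∫ x, f x ∂μ < c) :
    ∀ᵐ x ∂μ, ∃ C, ∀ n : ℕ, birkhoffSum T f n x ≤ n * c + C := by
  have hneg : ∫ x, (f x - c) ∂μ < 0 := by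
    rw [integral_sub hfi (integrable_const c), integral_const, probReal_univ, one_smul]
    linarith
  filter_upwards [hT.ae_bddAbove_birkhoffSum (hf.sub measurable_const)
    (hfi.sub (integrable_const c)) hneg] with x ⟨C, hC⟩
  refine ⟨C, fun n => ?_⟩
  have h : birkhoffSum T (f - fun _ => c) n x ≤ C := hC ⟨n, rfl⟩
  rw [birkhoffSum_sub, birkhoffSum_of_comp_eq (φ := fun _ => c) rfl, Pi.smul_apply,
    nsmul_eq_mul] at h
  linarith

theorem Ergodic.ae_eventually_birkhoffAverage_lt (hT : Ergodic T μ) (hf : Measurable f)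
    (hfi : Integrable f μ) :
    ∀ᵐ x ∂μ, ∀ a, ∫ x, f x ∂μ < a → ∀ᶠ n in atTop, birkhoffAverage ℝ T f n x < a := by
  filter_upwards [ae_all_iff.2 fun q : ℚ =>
    eventually_imp_distrib_left.2 (hT.ae_birkhoffSum_le_add hf hfi (c := q))] with x hx a ha
  obtain ⟨q, hfq, hqa⟩ := exists_rat_btwn ha
  obtain ⟨C, hC⟩ := hx q hfq
  have hlim : Tendsto (fun n : ℕ => (q : ℝ) + C / n) atTop (𝓝 q) := by
    simpa using tendsto_const_nhds.add (tendsto_const_div_atTop_nhds_zero_nat C)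
  filter_upwards [hlim.eventually (eventually_lt_nhds hqa), eventually_gt_atTop 0]
    with n hn hn0
  refine lt_of_le_of_lt ?_ hn
  have hn0' : (0 : ℝ) < n := Nat.cast_pos.2 hn0
  rw [birkhoffAverage, smul_eq_mul, inv_mul_le_iff₀ hn0']
  calc birkhoffSum T f n x ≤ n * q + C := hC n
    _ = n * (q + C / n) := by field_simp

theorem Ergodic.ae_tendsto_birkhoffAverage_of_measurable (hT : Ergodic T μ) (hf : Measurable f)
    (hfi : Integrable f μ) :
    ∀ᵐ x ∂μ, Tendsto (birkhoffAverage ℝ T f · x) atTop (𝓝 (∫ x, f x ∂μ)) := by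
  filter_upwards [hT.ae_eventually_birkhoffAverage_lt hf hfi,
    hT.ae_eventually_birkhoffAverage_lt hf.neg hfi.neg] with x hupper hlower
  refine tendsto_order.2 ⟨fun a ha => ?_, hupper⟩
  filter_upwards [hlower (-a) (by simpa [integral_neg] using ha)] with n hn
  simpa [birkhoffAverage_neg] using hn

end Ergodic

section Banach

variable {α E : Type*}

lemma norm_birkhoffAverage_le [SeminormedAddCommGroup E] [NormedSpace ℝ E] (T : α → α)
    (g : α → E) (n : ℕ) (x : α) :
    ‖birkhoffAverage ℝ T g n x‖ ≤ birkhoffAverage ℝ T (‖g ·‖) n x := by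
  simp only [birkhoffAverage, birkhoffSum, norm_smul, smul_eq_mul, norm_inv, Real.norm_natCast]
  gcongr
  exact norm_sum_le _ _

lemma dist_birkhoffAverage_le [SeminormedAddCommGroup E] [NormedSpace ℝ E] (T : α → α)
    (g g' : α → E) (n : ℕ) (x : α) :
    dist (birkhoffAverage ℝ T g n x) (birkhoffAverage ℝ T g' n x) ≤
      birkhoffAverage ℝ T (fun y => dist (g y) (g' y)) n x := by
  simpa only [dist_eq_norm, birkhoffAverage_sub, Pi.sub_apply] using
    norm_birkhoffAverage_le T (g - g') n x

variable [MeasurableSpace α] {μ : Measure α} {T : α → α}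
variable [NormedAddCommGroup E] [NormedSpace ℝ E] [CompleteSpace E] [IsProbabilityMeasure μ]

theorem Ergodic.isClosed_setOf_ae_tendsto_birkhoffAverage (hT : Ergodic T μ) :
    IsClosed {F : α →₁[μ] E |
      ∀ᵐ x ∂μ, Tendsto (birkhoffAverage ℝ T F · x) atTop (𝓝 (∫ x, F x ∂μ))} := by
  refine IsSeqClosed.isClosed fun F G hF hFG => ?_
  have hdist : ∀ k, ∀ᵐ x ∂μ, Tendsto (birkhoffAverage ℝ T (fun y => dist (F k y) (G y)) · x)
      atTop (𝓝 (dist (F k) G)) := fun k => by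
    rw [L1.dist_eq_integral_dist]
    exact hT.ae_tendsto_birkhoffAverage_of_measurable
      ((Lp.stronglyMeasurable _).dist (Lp.stronglyMeasurable _)).measurable
      (by simpa only [dist_eq_norm, Pi.sub_apply] using
        ((L1.integrable_coeFn _).sub (L1.integrable_coeFn _)).norm)
  filter_upwards [ae_all_iff.2 hF, ae_all_iff.2 hdist] with x hFx hdx
  refine Metric.tendsto_atTop.2 fun ε hε => ?_
  obtain ⟨k, hk⟩ := Metric.tendsto_atTop.1 hFG (ε / 3) (by positivity)
  replace hk := hk k le_rfl
  obtain ⟨N, hN⟩ := ((hdx k).eventually (eventually_lt_nhds hk)).and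
    ((hFx k).eventually (Metric.ball_mem_nhds _ (by positivity : 0 < ε / 3)))
    |>.exists_forall_of_atTop
  refine ⟨N, fun n hn => ?_⟩
  have hint : dist (∫ x, F k x ∂μ) (∫ x, G x ∂μ) ≤ dist (F k) G := by
    simpa only [← L1.integral_eq_integral, dist_eq_norm, L1.integral_sub] using
      L1.norm_integral_le (F k - G)
  calc dist (birkhoffAverage ℝ T G n x) (∫ x, G x ∂μ)
      ≤ dist (birkhoffAverage ℝ T G n x) (birkhoffAverage ℝ T (F k) n x) +
          dist (birkhoffAverage ℝ T (F k) n x) (∫ x, F k x ∂μ) +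
          dist (∫ x, F k x ∂μ) (∫ x, G x ∂μ) := dist_triangle4 _ _ _ _
    _ < ε / 3 + ε / 3 + ε / 3 := by
      gcongr
      · rw [dist_comm]
        exact (dist_birkhoffAverage_le T _ _ n x).trans_lt (hN n hn).1
      · exact (hN n hn).2
      · exact hint.trans_lt hk
    _ = ε := by ring

theorem Ergodic.ae_tendsto_birkhoffAverage (hT : Ergodic T μ) {f : α → E} (hf : Integrable f μ) :
    ∀ᵐ x ∂μ, Tendsto (birkhoffAverage ℝ T f · x) atTop (𝓝 (∫ x, f x ∂μ)) := by
  refine Integrable.induction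
    (fun f => ∀ᵐ x ∂μ, Tendsto (birkhoffAverage ℝ T f · x) atTop (𝓝 (∫ x, f x ∂μ)))
    ?indicator ?add hT.isClosed_setOf_ae_tendsto_birkhoffAverage ?congr hf
  case indicator =>
    intro c s hs _
    set L := ContinuousLinearMap.toSpanSingleton ℝ c
    set χ : α → ℝ := s.indicator 1
    have hχ : Integrable χ μ := (integrable_const 1).indicator hs
    have hL : s.indicator (fun _ => c) = L ∘ χ := by
      ext y
      by_cases hy : y ∈ s <;> simp [L, χ, hy]
    filter_upwards [hT.ae_tendsto_birkhoffAverage_of_measurable (measurable_one.indicator hs) hχ]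
      with x hx
    have hint : ∫ y, (L ∘ χ) y ∂μ = L (∫ y, χ y ∂μ) := L.integral_comp_comm hχ
    simp only [hL, hint, ← map_birkhoffAverage ℝ ℝ L]
    exact (L.continuous.tendsto _).comp hx
  case add =>
    intro f g _ hf hg hfx hgx
    filter_upwards [hfx, hgx] with x hfx hgx
    rw [integral_add' hf hg, birkhoffAverage_add]
    exact hfx.add hgx
  case congr =>
    intro f g hfg _ hfx
    filter_upwards [hfx, ae_all_iff.2
      (hT.quasiMeasurePreserving.birkhoffAverage_ae_eq_of_ae_eq ℝ hfg)] with x hfx hfgx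
    rw [← integral_congr_ae hfg]
    exact hfx.congr fun n => hfgx n

end Banach

theorem uniform_ergodic_lln_general {Ω : Type*} [MeasurableSpace Ω]
    (μ : Measure Ω) [IsProbabilityMeasure μ] {d : ℕ}
    (Θ : Set (Fin d → ℝ)) [CompactSpace Θ]
    (T : Ω → Ω) (hT : Ergodic T μ)
    (q0 : Ω → C(Θ, ℝ)) (hq0 : Integrable q0 μ) :
    ∀ᵐ ω ∂μ, Tendsto (fun n : ℕ =>
        ⨆ θ : Θ, |(n : ℝ)⁻¹ * (∑ t ∈ Finset.range n, q0 (T^[t] ω) θ) -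
          ∫ ω', q0 ω' θ ∂μ|) atTop (nhds 0) := by
  filter_upwards [hT.ae_tendsto_birkhoffAverage hq0] with ω hω
  convert tendsto_iff_norm_sub_tendsto_zero.1 hω using 2 with n
  rw [ContinuousMap.norm_eq_iSup_norm]
  congr! 2 with θ
  simp [birkhoffAverage, birkhoffSum, ContinuousMap.integral_apply hq0]

/-- Uniform strong law of large numbers (ergodic theorem in `C(Θ, ℝ)`): if
`q_t = q_0 ∘ T^t` is a stationary ergodic sequence of random continuous functions on a
compact set `Θ ⊆ ℝ^d` with `E[sup_θ |q_0(θ)|] < ∞`, then almost surely the Cesàro means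
`(1/n) ∑_{t<n} q_t` converge uniformly in `θ` to the deterministic function
`θ ↦ E[q_0(θ)]`. -/
theorem uniform_ergodic_lln {Ω : Type*} [MeasurableSpace Ω]
    (μ : Measure Ω) [IsProbabilityMeasure μ] {d : ℕ}
    (Θ : Set (Fin d → ℝ)) (hΘ : IsCompact Θ) [CompactSpace Θ]
    (T : Ω → Ω) (hT : Ergodic T μ)
    (q0 : Ω → C(Θ, ℝ)) (hq0 : Integrable q0 μ) :
    ∀ᵐ ω ∂μ, Tendsto (fun n : ℕ =>
        ⨆ θ : Θ, |(n : ℝ)⁻¹ * (∑ t ∈ Finset.range n, q0 (T^[t] ω) θ) -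
          ∫ ω', q0 ω' θ ∂μ|) atTop (nhds 0) :=
  uniform_ergodic_lln_general μ Θ T hT q0 hq0
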